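/- arXiv:2210.07830 — 4 statements merged into one kernel-verified Lean document; each statement's English description precedes it below -/
import Mathlib

section
/- Let s > 0 and let Γ ⊆ ℝᵈ × ℝᵈ be a set that is c-cyclically monotone for the cost c(x,y) = |x - y|^{-s} (in particular, for any two pairs (x₁,y₁), (x₂,y₂) ∈ Γ one has c(x₁,y₁) + c(x₂,y₂) ≤ c(x₁,y₂) + c(x₂,y₁)). Suppose there exists a sequence (x_k, y_k) ∈ Γ with |x_k| → ∞ and |y_k| → ∞. Then for every (x, y) ∈ Γ with x ≠ y one obtains the contradiction 0 < |x - y|^{-s} ≤ 0; hence no such sequence exists, i.e. Γ ∩ ((ℝᵈ \ B_R) × (ℝᵈ \ B_R)) = ∅ for some radius R. -/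
open Filter

/-- a c-cyclically monotone set (for the Riesz cost, off the diagonal)
cannot contain pairs with both points arbitrarily far away. -/
theorem stmt1 (d : ℕ) (s : ℝ) (hs : 0 < s)
    (Γ : Set (EuclideanSpace ℝ (Fin d) × EuclideanSpace ℝ (Fin d)))
    (hdiag : ∀ p ∈ Γ, p.1 ≠ p.2)
    (hmono : ∀ p ∈ Γ, ∀ q ∈ Γ,
      ‖p.1 - p.2‖ ^ (-s) + ‖q.1 - q.2‖ ^ (-s) ≤
        ‖p.1 - q.2‖ ^ (-s) + ‖q.1 - p.2‖ ^ (-s)) :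
    ∃ R : ℝ, ∀ p ∈ Γ, ¬ (R ≤ ‖p.1‖ ∧ R ≤ ‖p.2‖) := by
  by_contra h
  push_neg at h
  obtain ⟨q, hqΓ, -⟩ := h 0
  have hnorm : 0 < ‖q.1 - q.2‖ := by
    rw [norm_pos_iff]; exact sub_ne_zero.mpr (hdiag q hqΓ)
  set c : ℝ := ‖q.1 - q.2‖ ^ (-s) with hcdef
  have hc : 0 < c := Real.rpow_pos_of_pos hnorm _
  set T0 : ℝ := (c / 2) ^ (-s⁻¹) with hT0
  have hT0pos : 0 < T0 := Real.rpow_pos_of_pos (by linarith) _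
  have hT0val : T0 ^ (-s) = c / 2 := by
    rw [hT0, ← Real.rpow_mul (by positivity),
      show (-s⁻¹) * (-s) = 1 by field_simp, Real.rpow_one]
  set T : ℝ := T0 + 1 with hT
  have hTpos : 0 < T := by linarith
  have hTval : T ^ (-s) < c / 2 := by
    calc T ^ (-s) < T0 ^ (-s) :=
          Real.rpow_lt_rpow_of_neg hT0pos (by linarith) (by linarith)
      _ = c / 2 := hT0val
  obtain ⟨p, hpΓ, hp1, hp2⟩ := h (max ‖q.1‖ ‖q.2‖ + T)
  have hkey := hmono p hpΓ q hqΓ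
  have hA : ‖p.1 - q.2‖ ^ (-s) < c / 2 := by
    calc ‖p.1 - q.2‖ ^ (-s) ≤ T ^ (-s) := by
          apply Real.rpow_le_rpow_of_nonpos hTpos _ (by linarith)
          have := norm_sub_norm_le p.1 q.2
          have h2 : ‖q.2‖ ≤ max ‖q.1‖ ‖q.2‖ := le_max_right _ _
          linarith
      _ < c / 2 := hTval
  have hB : ‖q.1 - p.2‖ ^ (-s) < c / 2 := by
    calc ‖q.1 - p.2‖ ^ (-s) ≤ T ^ (-s) := by
          apply Real.rpow_le_rpow_of_nonpos hTpos _ (by linarith)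
          have h1 := norm_sub_norm_le p.2 q.1
          have h2 : ‖q.1‖ ≤ max ‖q.1‖ ‖q.2‖ := le_max_left _ _
          rw [norm_sub_rev] at h1
          linarith
      _ < c / 2 := hTval
  have hpp : 0 ≤ ‖p.1 - p.2‖ ^ (-s) := Real.rpow_nonneg (norm_nonneg _) _
  linarith
end

section
/- Let s > 0, η > 0, N ≥ 2, and w_η(x,y) = max(|x-y|, η)^{-s}. Suppose (r₁ᵏ, ..., r_Nᵏ) is a sequence of configurations in ℝᵈ such that |rᵢᵏ| → ∞ for i = 1, ..., J (with 2 ≤ J ≤ N) and rᵢᵏ → r̄ᵢ for i = J+1, ..., N, and suppose the inequality Σ_{i=2}^N w_η(r₁, rᵢ) + Σ_{i=2}^N w_η(r₁ᵏ, rᵢᵏ) ≤ Σ_{i=2}^N w_η(r₁ᵏ, rᵢ) + Σ_{i=2}^N w_η(r₁, rᵢᵏ) holds for all k and all configurations (r₁, ..., r_N) in a set Γ containing all the (r₁ᵏ, ..., r_Nᵏ). Then, in the limit k → ∞, for all (r₁, ..., r_N) ∈ Γ: Σ_{i=2}^N w_η(r₁, rᵢ) ≤ Σ_{i=J+1}^N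 w_η(r₁, r̄ᵢ). -/
/-!
Drop the nonnegative term `∑ w_η(r₁ᵏ, rᵢᵏ)` from the left-hand side and let `k → ∞`: since the
first particle escapes, `w_η(r₁ᵏ, rᵢ) → 0`, while `w_η(r₁, rᵢᵏ)` tends to `w_η(r₁, r̄ᵢ)` for the
converging particles and to `0` for the escaping ones, because `w_η` is continuous and decays at
infinity.
-/

open Filter Finset Topology

/-- Truncated Riesz interaction `w_η(x,y) = max(|x-y|, η)^{-s}`. -/
noncomputable def weta (d : ℕ) (s η : ℝ)
    (x y : EuclideanSpace ℝ (Fin d)) : ℝ :=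
  (max ‖x - y‖ η) ^ (-s)

section Weta

variable {d : ℕ} {s η : ℝ}

lemma weta_nonneg (hη : 0 < η) (x y : EuclideanSpace ℝ (Fin d)) : 0 ≤ weta d s η x y :=
  Real.rpow_nonneg (hη.le.trans (le_max_right _ _)) _

lemma weta_comm (x y : EuclideanSpace ℝ (Fin d)) : weta d s η x y = weta d s η y x := by
  rw [weta, weta, norm_sub_rev]

lemma Filter.Tendsto.weta {α : Type*} {l : Filter α} (hη : 0 < η)
    {f g : α → EuclideanSpace ℝ (Fin d)} {a b : EuclideanSpace ℝ (Fin d)}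
    (hf : Tendsto f l (𝓝 a)) (hg : Tendsto g l (𝓝 b)) :
    Tendsto (fun k => _root_.weta d s η (f k) (g k)) l (𝓝 (_root_.weta d s η a b)) :=
  ((hf.sub hg).norm.max tendsto_const_nhds).rpow_const
    (Or.inl (hη.trans_le (le_max_right _ _)).ne')

lemma tendsto_weta_left_zero {α : Type*} {l : Filter α} (hs : 0 < s)
    {f : α → EuclideanSpace ℝ (Fin d)} (hf : Tendsto (fun k => ‖f k‖) l atTop)
    (y : EuclideanSpace ℝ (Fin d)) :
    Tendsto (fun k => weta d s η (f k) y) l (𝓝 0) := by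
  have hdist : Tendsto (fun k => ‖f k - y‖) l atTop :=
    tendsto_atTop_mono (fun k => by linarith [norm_sub_norm_le (f k) y])
      (tendsto_atTop_add_const_right l (-‖y‖) hf)
  exact (tendsto_rpow_neg_atTop hs).comp
    (tendsto_atTop_mono (fun k => le_max_left _ η) hdist)

lemma tendsto_weta_right_zero {α : Type*} {l : Filter α} (hs : 0 < s)
    {f : α → EuclideanSpace ℝ (Fin d)} (hf : Tendsto (fun k => ‖f k‖) l atTop)
    (x : EuclideanSpace ℝ (Fin d)) :
    Tendsto (fun k => weta d s η x (f k)) l (𝓝 0) := by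
  simpa only [weta_comm x] using tendsto_weta_left_zero hs hf x

lemma tendsto_sum_weta {ι α : Type*} {l : Filter α} (hs : 0 < s) (hη : 0 < η)
    (T : Finset ι) (p : ι → Prop) [DecidablePred p] (x : EuclideanSpace ℝ (Fin d))
    {f : α → ι → EuclideanSpace ℝ (Fin d)} {a : ι → EuclideanSpace ℝ (Fin d)}
    (hesc : ∀ i ∈ T, ¬ p i → Tendsto (fun k => ‖f k i‖) l atTop)
    (hconv : ∀ i ∈ T, p i → Tendsto (fun k => f k i) l (𝓝 (a i))) :
    Tendsto (fun k => ∑ i ∈ T, weta d s η x (f k i)) l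
      (𝓝 (∑ i ∈ T.filter p, weta d s η x (a i))) := by
  rw [sum_filter]
  refine tendsto_finsetSum _ fun i hi => ?_
  by_cases hpi : p i
  · simpa only [if_pos hpi] using tendsto_const_nhds.weta hη (hconv i hi hpi)
  · simpa only [if_neg hpi] using tendsto_weta_right_zero hs (hesc i hi hpi) x

end Weta

/-- passing to the limit `k → ∞` in the reduced cyclical
monotonicity inequality when the first `J` particles escape to infinity. -/
theorem stmt3 (d N J : ℕ) (hJ : 2 ≤ J) (hJN : J ≤ N)
    (s η : ℝ) (hs : 0 < s) (hη : 0 < η)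
    (Γ : Set (Fin N → EuclideanSpace ℝ (Fin d)))
    (rk : ℕ → Fin N → EuclideanSpace ℝ (Fin d))
    (rbar : Fin N → EuclideanSpace ℝ (Fin d))
    (hesc : ∀ i : Fin N, (i : ℕ) < J →
      Tendsto (fun k => ‖rk k i‖) atTop atTop)
    (hconv : ∀ i : Fin N, J ≤ (i : ℕ) →
      Tendsto (fun k => rk k i) atTop (nhds (rbar i)))
    (hineq : ∀ k, ∀ r ∈ Γ,
      ((∑ i ∈ univ.filter (fun i : Fin N => i ≠ ⟨0, by omega⟩),
          weta d s η (r ⟨0, by omega⟩) (r i)) +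
        ∑ i ∈ univ.filter (fun i : Fin N => i ≠ ⟨0, by omega⟩),
          weta d s η (rk k ⟨0, by omega⟩) (rk k i)) ≤
      ((∑ i ∈ univ.filter (fun i : Fin N => i ≠ ⟨0, by omega⟩),
          weta d s η (rk k ⟨0, by omega⟩) (r i)) +
        ∑ i ∈ univ.filter (fun i : Fin N => i ≠ ⟨0, by omega⟩),
          weta d s η (r ⟨0, by omega⟩) (rk k i))) :
    ∀ r ∈ Γ,
      (∑ i ∈ univ.filter (fun i : Fin N => i ≠ ⟨0, by omega⟩),
        weta d s η (r ⟨0, by omega⟩) (r i)) ≤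
      ∑ i ∈ univ.filter (fun i : Fin N => J ≤ (i : ℕ)),
        weta d s η (r ⟨0, by omega⟩) (rbar i) := by
  intro r hr
  set z : Fin N := ⟨0, by omega⟩
  set S : Finset (Fin N) := univ.filter (fun i : Fin N => i ≠ z)
  have hbound : ∀ k, ∑ i ∈ S, weta d s η (r z) (r i) ≤
      (∑ i ∈ S, weta d s η (rk k z) (r i)) + ∑ i ∈ S, weta d s η (r z) (rk k i) := fun k => by
    have hnonneg : 0 ≤ ∑ i ∈ S, weta d s η (rk k z) (rk k i) :=
      sum_nonneg fun i _ => weta_nonneg hη _ _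
    linarith [hineq k r hr]
  have hfirst : Tendsto (fun k => ∑ i ∈ S, weta d s η (rk k z) (r i)) atTop (𝓝 0) := by
    simpa using tendsto_finsetSum S fun i _ =>
      tendsto_weta_left_zero hs (hesc z (show 0 < J by omega)) (r i)
  have hsecond := tendsto_sum_weta hs hη S (fun i : Fin N => J ≤ (i : ℕ)) (r z)
    (fun i _ hi => hesc i (not_le.mp hi)) (fun i _ hi => hconv i hi)
  have hfilter : S.filter (fun i : Fin N => J ≤ (i : ℕ)) = univ.filter (J ≤ ·.val) := by
    ext i
    simp only [S, z, filter_filter, mem_filter, mem_univ, true_and, and_iff_right_iff_imp]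
    exact fun hi h0 => by subst h0; simp at hi; omega
  simpa [hfilter] using le_of_tendsto_of_tendsto' tendsto_const_nhds (hfirst.add hsecond) hbound
end

section
/- Let s > 0, N ≥ 2, and v : ℝᵈ → ℝ continuous, vanishing at infinity, with v(r) = -(N-1)/|r|^s + o(|r|^{-s}) as |r| → ∞ along an unbounded set Ω ⊆ ℝᵈ. Fix 2 ≤ K ≤ N-1 and suppose E_{K-1}(v) is attained at a configuration (r̄₁, ..., r̄_{K-1}). Then E_K(v) < E_{K-1}(v). -/
/-!
Add one particle to a minimiser `r̄` of `E_{K-1}`, far out in `Ω`. Seen from a distant point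
`r`, each of the `K - 1` particles contributes `|r - r̄ᵢ|^{-s} ~ |r|^{-s}`, while the potential
contributes `v r ~ -(N - 1) |r|^{-s}`; since `K - 1 < N - 1` the added energy is negative there.
The energies are bounded below (`v` is continuous and vanishes at infinity), so `E_K` is a genuine
infimum and is at most the energy of the extended configuration.
-/

open Filter Finset

/-- Classical `K`-particle energy with Riesz pair interaction `|x-y|^{-s}`
and external potential `v`. -/
noncomputable def energy (d K : ℕ) (s : ℝ)
    (v : EuclideanSpace ℝ (Fin d) → ℝ) (r : Fin K → EuclideanSpace ℝ (Fin d)) : ℝ :=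
  (∑ i : Fin K, ∑ j ∈ univ.filter (fun j => i < j), ‖r i - r j‖ ^ (-s)) +
    ∑ i : Fin K, v (r i)

/-- Classical `K`-particle ground-state energy `E_K(v)`. -/
noncomputable def EK (d K : ℕ) (s : ℝ)
    (v : EuclideanSpace ℝ (Fin d) → ℝ) : ℝ :=
  ⨅ r : Fin K → EuclideanSpace ℝ (Fin d), energy d K s v r

open Topology Bornology

lemma neBot_cobounded_inf_principal {α : Type*} [Bornology α] {Ω : Set α}
    (hΩ : ¬IsBounded Ω) : (cobounded α ⊓ 𝓟 Ω).NeBot :=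
  ⟨fun h => hΩ (isBounded_def.2 (inf_principal_eq_bot.1 h))⟩

section Asymptotics

variable {E : Type*} [NormedAddCommGroup E]

lemma tendsto_norm_sub_div_norm_cobounded (c : E) :
    Tendsto (fun r => ‖r - c‖ / ‖r‖) (cobounded E) (𝓝 1) := by
  have hn : Tendsto (‖·‖) (cobounded E) atTop := tendsto_norm_cobounded_atTop
  have hc : Tendsto (fun r : E => ‖c‖ / ‖r‖) (cobounded E) (𝓝 0) :=
    tendsto_const_nhds.div_atTop hn
  refine tendsto_of_tendsto_of_tendsto_of_le_of_le' (by simpa using tendsto_const_nhds.sub hc)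
    (by simpa using tendsto_const_nhds.add hc) ?_ ?_ <;>
  filter_upwards [hn.eventually_gt_atTop 0] with r hr
  · rw [one_sub_div hr.ne', div_le_div_iff_of_pos_right hr]
    exact norm_sub_norm_le r c
  · rw [one_add_div hr.ne', div_le_div_iff_of_pos_right hr]
    exact norm_sub_le r c

lemma tendsto_norm_rpow_mul_norm_sub_rpow_neg (s : ℝ) (c : E) :
    Tendsto (fun r => ‖r‖ ^ s * ‖r - c‖ ^ (-s)) (cobounded E) (𝓝 1) := by
  have h := (tendsto_norm_sub_div_norm_cobounded c).rpow_const (p := -s) (Or.inl one_ne_zero)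
  rw [Real.one_rpow] at h
  refine h.congr fun r => ?_
  rw [Real.div_rpow (norm_nonneg _) (norm_nonneg _), Real.rpow_neg (norm_nonneg r),
    div_inv_eq_mul, mul_comm]

lemma eventually_add_sum_rpow_neg_neg {ι : Type*} [Fintype ι] {s a : ℝ} {v : E → ℝ}
    {l : Filter E} (hl : l ≤ cobounded E) (hv : Tendsto (fun r => ‖r‖ ^ s * v r) l (𝓝 (-a)))
    (c : ι → E) (hca : (Fintype.card ι : ℝ) < a) :
    ∀ᶠ r in l, v r + ∑ i, ‖c i - r‖ ^ (-s) < 0 := by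
  have hsum : Tendsto (fun r => ∑ i, ‖r‖ ^ s * ‖c i - r‖ ^ (-s)) l (𝓝 (Fintype.card ι)) := by
    simpa [norm_sub_rev] using tendsto_finsetSum univ fun i _ =>
      (tendsto_norm_rpow_mul_norm_sub_rpow_neg s (c i)).mono_left hl
  have hlim : Tendsto (fun r => ‖r‖ ^ s * (v r + ∑ i, ‖c i - r‖ ^ (-s))) l
      (𝓝 (-a + Fintype.card ι)) := by
    simpa only [mul_add, mul_sum] using hv.add hsum
  filter_upwards [hlim.eventually_lt_const (show -a + Fintype.card ι < 0 by linarith)] with r hr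
  exact neg_of_mul_neg_right hr (Real.rpow_nonneg (norm_nonneg r) s)

end Asymptotics

section Energy

variable {d : ℕ} {s : ℝ} {v : EuclideanSpace ℝ (Fin d) → ℝ}

lemma energy_snoc {m : ℕ} (r : Fin m → EuclideanSpace ℝ (Fin d))
    (x : EuclideanSpace ℝ (Fin d)) :
    energy d (m + 1) s v (Fin.snoc r x) =
      energy d m s v r + (v x + ∑ i, ‖r i - x‖ ^ (-s)) := by
  unfold energy
  simp only [Fin.sum_univ_castSucc, Fin.snoc_castSucc, Fin.snoc_last]
  have hlast : ∑ j ∈ univ.filter (fun j : Fin (m + 1) => Fin.last m < j),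
      ‖x - (Fin.snoc r x : Fin (m + 1) → EuclideanSpace ℝ (Fin d)) j‖ ^ (-s) = 0 := by
    rw [filter_false_of_mem fun j _ => not_lt.mpr (Fin.le_last j), sum_empty]
  have hrow : ∀ i : Fin m, ∑ j ∈ univ.filter (fun j : Fin (m + 1) => Fin.castSucc i < j),
      ‖r i - (Fin.snoc r x : Fin (m + 1) → EuclideanSpace ℝ (Fin d)) j‖ ^ (-s)
      = (∑ j ∈ univ.filter (fun j => i < j), ‖r i - r j‖ ^ (-s)) + ‖r i - x‖ ^ (-s) := by
    intro i
    rw [sum_filter, sum_filter, Fin.sum_univ_castSucc]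
    simp [Fin.castSucc_lt_castSucc_iff, Fin.castSucc_lt_last]
  simp only [hlast, hrow, sum_add_distrib]
  ring

lemma bddBelow_range_energy (K : ℕ) (hv : BddBelow (Set.range v)) :
    BddBelow (Set.range (energy d K s v)) := by
  obtain ⟨b, hb⟩ := hv
  refine ⟨K * b, ?_⟩
  rintro _ ⟨r, rfl⟩
  have hpair : 0 ≤ ∑ i : Fin K, ∑ j ∈ univ.filter (fun j => i < j), ‖r i - r j‖ ^ (-s) :=
    sum_nonneg fun i _ => sum_nonneg fun j _ => Real.rpow_nonneg (norm_nonneg _) _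
  have hpot : K * b ≤ ∑ i : Fin K, v (r i) := by
    simpa using card_nsmul_le_sum univ (fun i => v (r i)) b fun i _ => hb ⟨r i, rfl⟩
  unfold energy
  linarith

lemma EK_le_energy {K : ℕ} (hv : BddBelow (Set.range v))
    (r : Fin K → EuclideanSpace ℝ (Fin d)) : EK d K s v ≤ energy d K s v r :=
  ciInf_le (bddBelow_range_energy K hv) r

end Energy

theorem stmt8_general (d N K : ℕ) (hK : 2 ≤ K) (hKN : K ≤ N - 1)
    (s : ℝ)
    (v : EuclideanSpace ℝ (Fin d) → ℝ) (hv : Continuous v)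
    (hv0 : Tendsto v (comap (fun r : EuclideanSpace ℝ (Fin d) => ‖r‖) atTop) (nhds 0))
    (Ω : Set (EuclideanSpace ℝ (Fin d))) (hΩ : ¬ Bornology.IsBounded Ω)
    (hasym : Tendsto (fun r => ‖r‖ ^ s * v r)
      ((comap (fun r : EuclideanSpace ℝ (Fin d) => ‖r‖) atTop) ⊓ Filter.principal Ω)
      (nhds (-((N : ℝ) - 1))))
    (rbar : Fin (K - 1) → EuclideanSpace ℝ (Fin d))
    (hatt : energy d (K - 1) s v rbar = EK d (K - 1) s v) :
    EK d K s v < EK d (K - 1) s v := by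
  obtain ⟨m, rfl⟩ : ∃ m, K = m + 1 := ⟨K - 1, by omega⟩
  simp only [Nat.add_sub_cancel] at hatt ⊢
  rw [comap_norm_atTop] at hv0 hasym
  have hvbdd : BddBelow (Set.range v) := by
    rw [Metric.cobounded_eq_cocompact] at hv0
    let v₀ : ZeroAtInftyContinuousMap (EuclideanSpace ℝ (Fin d)) ℝ := ⟨⟨v, hv⟩, hv0⟩
    exact v₀.isBounded_range.bddBelow
  have := neBot_cobounded_inf_principal hΩ
  have hm : (Fintype.card (Fin m) : ℝ) < N - 1 := by
    rw [Fintype.card_fin]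
    have : (m : ℝ) + 2 ≤ N := by exact_mod_cast (by omega : m + 2 ≤ N)
    linarith
  obtain ⟨x, hx⟩ := (eventually_add_sum_rpow_neg_neg inf_le_left hasym rbar hm).exists
  calc EK d (m + 1) s v ≤ energy d (m + 1) s v (Fin.snoc rbar x) := EK_le_energy hvbdd _
    _ = energy d m s v rbar + (v x + ∑ i, ‖rbar i - x‖ ^ (-s)) := energy_snoc rbar x
    _ < energy d m s v rbar := by linarith
    _ = EK d m s v := hatt

/-- induction step, `E_K(v) < E_{K-1}(v)` for `2 ≤ K ≤ N-1`
when `E_{K-1}(v)` is attained. -/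
theorem stmt8 (d N K : ℕ) (hN : 2 ≤ N) (hK : 2 ≤ K) (hKN : K ≤ N - 1)
    (s : ℝ) (hs : 0 < s)
    (v : EuclideanSpace ℝ (Fin d) → ℝ) (hv : Continuous v)
    (hv0 : Tendsto v (comap (fun r : EuclideanSpace ℝ (Fin d) => ‖r‖) atTop) (nhds 0))
    (Ω : Set (EuclideanSpace ℝ (Fin d))) (hΩ : ¬ Bornology.IsBounded Ω)
    (hasym : Tendsto (fun r => ‖r‖ ^ s * v r)
      ((comap (fun r : EuclideanSpace ℝ (Fin d) => ‖r‖) atTop) ⊓ Filter.principal Ω)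
      (nhds (-((N : ℝ) - 1))))
    (rbar : Fin (K - 1) → EuclideanSpace ℝ (Fin d))
    (hatt : energy d (K - 1) s v rbar = EK d (K - 1) s v) :
    EK d K s v < EK d (K - 1) s v :=
  stmt8_general d N K hK hKN s v hv hv0 Ω hΩ hasym rbar hatt
end

section
/- Let s > 0, N ≥ 2, η > 0, and |z|_η := max(|z|, η). Let v : ℝᵈ → ℝ satisfy the self-consistent equation v(r₁) = sup over (r₂,...,r_N) of { -Σ_{i=2}^N v(rᵢ) - Σ_{1≤i<j≤N} |rᵢ - rⱼ|_η^{-s} }. Then for any fixed points r̄₂, ..., r̄_N ∈ ℝᵈ such that Σ_{2≤i<j≤N} |r̄ᵢ - r̄ⱼ|_η^{-s} + Σ_{i=2}^N v(r̄ᵢ) = E_N(v), one has for all r ∈ ℝᵈ: v(r) - E_N(v) ≥ -Σ_{i=2}^N |r - r̄ᵢ|_η^{-s}, and consequently v(r) - E_N(v) ≥ -(N-1)/|r|^s + o(|r|^{-s}) as |r| → ∞. -/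
/-!
The self-consistent equation says that `v r₁` is the best energy gain obtainable by placing the
other `N - 1` particles, so every `N`-particle energy `v r₁ - (gain of q)` is nonnegative and
their infimum `E_N(v)` is exactly `0`. Testing the supremum defining `v r` with the minimising
configuration `r̄` then gives `v r ≥ -∑ᵢ |r - r̄ᵢ|_η^{-s}`. Finally each `|r - r̄ᵢ|_η` differs from
`|r|` by a bounded amount, so `|r - r̄ᵢ|_η^{-s} ~ |r|^{-s}` and the sum is
`(N - 1) |r|^{-s} + o(|r|^{-s})`.
-/

open Filter Finset Asymptotics

noncomputable def energyEta (d K : ℕ) (s η : ℝ)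
    (v : EuclideanSpace ℝ (Fin d) → ℝ) (r : Fin K → EuclideanSpace ℝ (Fin d)) : ℝ :=
  (∑ i : Fin K, ∑ j ∈ univ.filter (fun j => i < j), (max ‖r i - r j‖ η) ^ (-s)) +
    ∑ i : Fin K, v (r i)

theorem le_iSup_of_le_of_nonpos {ι : Sort*} {f : ι → ℝ} {a : ℝ} (i : ι) (hi : a ≤ f i)
    (ha : a ≤ 0) : a ≤ ⨆ i, f i := by
  by_cases hf : BddAbove (Set.range f)
  · exact le_ciSup_of_le hf i hi
  · rwa [Real.iSup_of_not_bddAbove hf]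

-- No boundedness is assumed: unbounded suprema and infima of reals are `0` in Mathlib.
theorem iInf_sub_eq_zero_of_forall_eq_iSup {α β : Type*} (v : α → ℝ) (g : α → β → ℝ)
    (hv : ∀ x, v x = ⨆ y, g x y) : ⨅ p : α × β, (v p.1 - g p.1 p.2) = 0 := by
  by_cases hb : BddBelow (Set.range fun p : α × β => v p.1 - g p.1 p.2)
  · obtain ⟨c, hc⟩ := hb
    have hg : ∀ x, BddAbove (Set.range (g x)) := fun x =>
      ⟨v x - c, by rintro _ ⟨y, rfl⟩; linarith [hc ⟨(x, y), rfl⟩]⟩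
    refine le_antisymm ?_ (Real.iInf_nonneg fun p => ?_)
    · rcases isEmpty_or_nonempty (α × β) with _ | ⟨x, y⟩
      · exact (Real.iInf_of_isEmpty _).le
      · have : Nonempty β := ⟨y⟩
        have hle : ∀ y', g x y' ≤ v x - ⨅ p : α × β, (v p.1 - g p.1 p.2) := fun y' => by
          linarith [ciInf_le ⟨c, hc⟩ (x, y')]
        have : v x ≤ v x - ⨅ p : α × β, (v p.1 - g p.1 p.2) :=
          (hv x).trans_le (ciSup_le hle)
        linarith
    · rw [sub_nonneg, hv]
      exact le_ciSup (hg p.1) p.2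
  · exact Real.iInf_of_not_bddBelow hb

section Asymptotics

variable {E : Type*} [SeminormedAddCommGroup E]

theorem abs_max_norm_sub_sub_norm_le (r a : E) (η : ℝ) :
    |max ‖r - a‖ η - ‖r‖| ≤ ‖a‖ + |η| := by
  have h₁ := norm_sub_le r a
  have h₂ := norm_sub_norm_le r a
  rw [abs_sub_le_iff, sub_le_iff_le_add, max_le_iff]
  refine ⟨⟨by linarith [abs_nonneg η], by linarith [le_abs_self η, norm_nonneg r, norm_nonneg a]⟩,
    by linarith [le_max_left ‖r - a‖ η, abs_nonneg η]⟩

theorem isEquivalent_max_norm_sub_norm (a : E) (η : ℝ) :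
    (fun r : E => max ‖r - a‖ η) ~[comap norm atTop] fun r => ‖r‖ := by
  refine IsLittleO.isEquivalent (IsBigO.trans_isLittleO (g := fun _ => (1 : ℝ)) ?_ ?_)
  · refine IsBigO.of_bound (‖a‖ + |η|) (Eventually.of_forall fun r => ?_)
    simpa using abs_max_norm_sub_sub_norm_le r a η
  · exact (isLittleO_one_left_iff ℝ).2 (by simpa only [norm_norm] using tendsto_comap)

theorem isEquivalent_max_norm_sub_rpow_neg (a : E) (s η : ℝ) :
    (fun r : E => max ‖r - a‖ η ^ (-s)) ~[comap norm atTop] fun r => ‖r‖ ^ (-s) :=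
  (isEquivalent_max_norm_sub_norm a η).rpow fun r => norm_nonneg r

theorem sum_max_norm_sub_rpow_neg_sub_isLittleO {ι : Type*} [Fintype ι] (a : ι → E) (s η : ℝ) :
    (fun r : E => ∑ i, max ‖r - a i‖ η ^ (-s) - Fintype.card ι * ‖r‖ ^ (-s))
      =o[comap norm atTop] fun r => ‖r‖ ^ (-s) := by
  have := IsLittleO.fun_sum fun i (_ : i ∈ univ) =>
    (isEquivalent_max_norm_sub_rpow_neg (a i) s η).isLittleO
  simpa [Finset.sum_sub_distrib] using this

end Asymptotics

theorem energyEta_cons (d n : ℕ) (s η : ℝ) (v : EuclideanSpace ℝ (Fin d) → ℝ)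
    (r₁ : EuclideanSpace ℝ (Fin d)) (q : Fin n → EuclideanSpace ℝ (Fin d)) :
    energyEta d (n + 1) s η v (Fin.cons r₁ q) =
      energyEta d n s η v q + ((∑ i, (max ‖r₁ - q i‖ η) ^ (-s)) + v r₁) := by
  simp only [energyEta, Finset.sum_filter, Fin.sum_univ_succ, Fin.cons_zero, Fin.cons_succ,
    Fin.succ_lt_succ_iff, Fin.succ_pos, Fin.not_lt_zero, if_true, if_false, zero_add]
  ring

theorem iInf_energyEta_eq_zero {d n : ℕ} {s η : ℝ} {v : EuclideanSpace ℝ (Fin d) → ℝ}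
    (hself : ∀ r₁, v r₁ = ⨆ q : Fin n → EuclideanSpace ℝ (Fin d),
      (-(∑ i, v (q i)) - ((∑ i, (max ‖r₁ - q i‖ η) ^ (-s)) +
        ∑ i, ∑ j ∈ univ.filter (fun j => i < j), (max ‖q i - q j‖ η) ^ (-s)))) :
    ⨅ r, energyEta d (n + 1) s η v r = 0 := by
  rw [← (Fin.consEquiv fun _ => EuclideanSpace ℝ (Fin d)).iInf_comp]
  convert iInf_sub_eq_zero_of_forall_eq_iSup v _ hself using 3 with p
  rw [Fin.consEquiv, Equiv.coe_fn_mk, energyEta_cons, energyEta]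
  ring

theorem stmt11_general (d N : ℕ) (hN : 2 ≤ N) (s η : ℝ)
    (v : EuclideanSpace ℝ (Fin d) → ℝ)
    (hself : ∀ r₁ : EuclideanSpace ℝ (Fin d),
      v r₁ = ⨆ q : Fin (N - 1) → EuclideanSpace ℝ (Fin d),
        (- (∑ i : Fin (N - 1), v (q i))
          - ((∑ i : Fin (N - 1), (max ‖r₁ - q i‖ η) ^ (-s)) +
             ∑ i : Fin (N - 1), ∑ j ∈ univ.filter (fun j => i < j),
               (max ‖q i - q j‖ η) ^ (-s))))
    (rbar : Fin (N - 1) → EuclideanSpace ℝ (Fin d))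
    (hE : (∑ i : Fin (N - 1), ∑ j ∈ univ.filter (fun j => i < j),
            (max ‖rbar i - rbar j‖ η) ^ (-s)) + ∑ i : Fin (N - 1), v (rbar i)
          = ⨅ r : Fin N → EuclideanSpace ℝ (Fin d), energyEta d N s η v r) :
    (∀ r : EuclideanSpace ℝ (Fin d),
      - ∑ i : Fin (N - 1), (max ‖r - rbar i‖ η) ^ (-s) ≤
        v r - ⨅ r' : Fin N → EuclideanSpace ℝ (Fin d), energyEta d N s η v r') ∧
    (∀ ε : ℝ, 0 < ε →
      ∀ᶠ r : EuclideanSpace ℝ (Fin d) in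
          comap (fun r : EuclideanSpace ℝ (Fin d) => ‖r‖) atTop,
        -(((N : ℝ) - 1) + ε) / ‖r‖ ^ s ≤
          v r - ⨅ r' : Fin N → EuclideanSpace ℝ (Fin d), energyEta d N s η v r') := by
  have hE0 : ⨅ r, energyEta d N s η v r = 0 := by
    obtain ⟨n, rfl⟩ : ∃ n, N = n + 1 := ⟨N - 1, by omega⟩
    exact iInf_energyEta_eq_zero hself
  have hlower : ∀ r, -∑ i, (max ‖r - rbar i‖ η) ^ (-s) ≤ v r := fun r => by
    rw [hself r]
    refine le_iSup_of_le_of_nonpos rbar (by linarith [hE.trans hE0]) ?_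
    exact neg_nonpos.2 (sum_nonneg fun i _ =>
      Real.rpow_nonneg ((norm_nonneg _).trans (le_max_left _ _)) _)
  refine ⟨fun r => by simpa only [hE0, sub_zero] using hlower r, fun ε hε => ?_⟩
  filter_upwards [(sum_max_norm_sub_rpow_neg_sub_isLittleO rbar s η).def hε] with r hr
  rw [Real.norm_of_nonneg (Real.rpow_nonneg (norm_nonneg r) _), Fintype.card_fin,
    Real.norm_eq_abs, abs_le] at hr
  rw [hE0, sub_zero, ← Nat.cast_pred (by omega), neg_div, div_eq_mul_inv,
    ← Real.rpow_neg (norm_nonneg r)]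
  linarith [hlower r, hr.2]

/-- the lower-bound step — for a potential `v` satisfying the
self-consistent equation, and points `r̄₂, …, r̄_N` realizing `E_N(v)` with one
particle removed, one has `v(r) - E_N(v) ≥ -Σᵢ |r - r̄ᵢ|_η^{-s}`, and hence
`v(r) - E_N(v) ≥ -(N-1)/|r|^s + o(|r|^{-s})` at infinity. -/
theorem stmt11 (d N : ℕ) (hN : 2 ≤ N) (s η : ℝ) (hs : 0 < s) (hη : 0 < η)
    (v : EuclideanSpace ℝ (Fin d) → ℝ)
    (hself : ∀ r₁ : EuclideanSpace ℝ (Fin d),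
      v r₁ = ⨆ q : Fin (N - 1) → EuclideanSpace ℝ (Fin d),
        (- (∑ i : Fin (N - 1), v (q i))
          - ((∑ i : Fin (N - 1), (max ‖r₁ - q i‖ η) ^ (-s)) +
             ∑ i : Fin (N - 1), ∑ j ∈ univ.filter (fun j => i < j),
               (max ‖q i - q j‖ η) ^ (-s))))
    (rbar : Fin (N - 1) → EuclideanSpace ℝ (Fin d))
    (hE : (∑ i : Fin (N - 1), ∑ j ∈ univ.filter (fun j => i < j),
            (max ‖rbar i - rbar j‖ η) ^ (-s)) + ∑ i : Fin (N - 1), v (rbar i)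
          = ⨅ r : Fin N → EuclideanSpace ℝ (Fin d), energyEta d N s η v r) :
    (∀ r : EuclideanSpace ℝ (Fin d),
      - ∑ i : Fin (N - 1), (max ‖r - rbar i‖ η) ^ (-s) ≤
        v r - ⨅ r' : Fin N → EuclideanSpace ℝ (Fin d), energyEta d N s η v r') ∧
    (∀ ε : ℝ, 0 < ε →
      ∀ᶠ r : EuclideanSpace ℝ (Fin d) in
          comap (fun r : EuclideanSpace ℝ (Fin d) => ‖r‖) atTop,
        -(((N : ℝ) - 1) + ε) / ‖r‖ ^ s ≤
          v r - ⨅ r' : Fin N → EuclideanSpace ℝ (Fin d), energyEta d N s η v r') :=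
  stmt11_general d N hN s η v hself rbar hE
end
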